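/- arXiv:2012.05768 — 2 statements merged into one kernel-verified Lean document; each statement's English description precedes it below -/
import Mathlib

section
/- For any Hermitian matrix H on an n-qubit system A (dimension d_A = 2^n) and any single-qubit pure state |r⟩ on an ancillary qubit system R, the trace norm ‖H‖₁ equals max over unitaries U⁺ on AR of Tr[(I_A ⊗ |0⟩⟨0|_R) U⁺ (H ⊗ |r⟩⟨r|) U⁺†] plus max over unitaries U⁻ on AR of Tr[(I_A ⊗ |0⟩⟨0|_R) U⁻ (−H ⊗ |r⟩⟨r|) U⁻†]. -/
/-!
Diagonalize `H = V diag(λ) V†` and write `|r⟩⟨r| = W |0⟩⟨0| W†` with `W` unitary. Since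
`U ↦ U (V ⊗ W)` permutes the unitary group, both maxima are maxima of `Tr[P T D T†]` over
unitaries `T`, with `P = I ⊗ |0⟩⟨0|` and `D = diag(±λ) ⊗ |0⟩⟨0|` both diagonal. For
`P = diag(p)` with `0 ≤ p ≤ 1` and `D = diag(μ)` this trace is `∑_c w_c μ_c`, where `w_c = ∑_a p_a |T_ac|² ∈ [0, 1]`
because the columns of `T` are unit vectors; hence it is at most the sum of the positive entries
of `D`, i.e. of the positive eigenvalues. A permutation matrix that moves every negative
eigenvalue to the `|1⟩` slot attains this bound. The two maxima are thus `∑ max(λ, 0)` and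
`∑ max(-λ, 0)`, which add up to `∑ |λ| = ‖H‖₁`.
-/

open Matrix Kronecker

/-- Trace norm of a Hermitian matrix: sum of absolute values of eigenvalues. -/
noncomputable def traceNorm {n : Type*} [Fintype n] [DecidableEq n] (H : Matrix n n ℂ) : ℝ :=
  if h : H.IsHermitian then ∑ i, |h.eigenvalues i| else 0

section

variable {m : Type*} [Fintype m] [DecidableEq m]

lemma permMatrix_mul_diagonal_mul_star (σ : Equiv.Perm m) (d : m → ℂ) :
    σ.permMatrix ℂ * diagonal d * star (σ.permMatrix ℂ) = diagonal (d ∘ σ) := by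
  rw [star_eq_conjTranspose, conjTranspose_permMatrix, PEquiv.toMatrix_toPEquiv_mul,
    PEquiv.mul_toMatrix_toPEquiv, submatrix_submatrix]
  exact submatrix_diagonal_equiv d σ

lemma permMatrix_mem_unitaryGroup (σ : Equiv.Perm m) : σ.permMatrix ℂ ∈ unitaryGroup m ℂ := by
  rw [mem_unitaryGroup_iff]
  simpa using permMatrix_mul_diagonal_mul_star σ 1

def unitaryConjTraces (P K : Matrix m m ℂ) : Set ℝ :=
  {x | ∃ U ∈ unitaryGroup m ℂ, (P * (U * K * star U)).trace = x}

lemma unitaryConjTraces_conj {W : Matrix m m ℂ} (hW : W ∈ unitaryGroup m ℂ) (P K : Matrix m m ℂ) :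
    unitaryConjTraces P (W * K * star W) = unitaryConjTraces P K := by
  have key : ∀ {W : Matrix m m ℂ}, W ∈ unitaryGroup m ℂ → ∀ K,
      unitaryConjTraces P (W * K * star W) ⊆ unitaryConjTraces P K := by
    rintro W hW K x ⟨U, hU, hx⟩
    refine ⟨U * W, Submonoid.mul_mem _ hU hW, ?_⟩
    simpa only [star_mul, Matrix.mul_assoc] using hx
  refine (key hW K).antisymm ?_
  calc unitaryConjTraces P K
      = unitaryConjTraces P (star W * (W * K * star W) * star (star W)) := by
        rw [star_star, ← Matrix.mul_assoc, ← Matrix.mul_assoc, Unitary.star_mul_self_of_mem hW,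
          Matrix.one_mul, Matrix.mul_assoc, Unitary.star_mul_self_of_mem hW, Matrix.mul_one]
    _ ⊆ _ := key (Unitary.star_mem hW) _

lemma mem_unitaryConjTraces_of_trace_eq {P K : Matrix m m ℂ} {x : ℝ} (hx : (P * K).trace = x) :
    x ∈ unitaryConjTraces P K :=
  ⟨1, one_mem _, by simpa using hx⟩

lemma mul_diagonal_mul_star_apply_self (μ : m → ℝ) (T : Matrix m m ℂ) (a : m) :
    (T * diagonal (fun c => (μ c : ℂ)) * star T) a a =
      ((∑ c, Complex.normSq (T a c) * μ c : ℝ) : ℂ) := by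
  rw [mul_apply]
  push_cast
  refine Finset.sum_congr rfl fun c _ => ?_
  rw [mul_diagonal, star_apply, Complex.star_def, Complex.normSq_eq_conj_mul_self]
  ring

lemma trace_diagonal_mul_conj_diagonal (p μ : m → ℝ) (T : Matrix m m ℂ) :
    (diagonal (fun a => (p a : ℂ)) * (T * diagonal (fun c => (μ c : ℂ)) * star T)).trace =
      ((∑ c, (∑ a, p a * Complex.normSq (T a c)) * μ c : ℝ) : ℂ) := by
  simp only [trace, diag_apply, diagonal_mul, mul_diagonal_mul_star_apply_self]
  push_cast
  simp only [Finset.mul_sum, Finset.sum_mul]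
  rw [Finset.sum_comm]
  exact Finset.sum_congr rfl fun _ _ => Finset.sum_congr rfl fun _ _ => by ring

lemma sum_normSq_col_eq_one_of_mem_unitaryGroup {T : Matrix m m ℂ} (hT : T ∈ unitaryGroup m ℂ)
    (c : m) :
    ∑ a, Complex.normSq (T a c) = 1 := by
  have h := mul_diagonal_mul_star_apply_self 1 (star T) c
  simp only [Pi.one_apply, Complex.ofReal_one, diagonal_one, star_star,
    Unitary.star_mul_self_of_mem hT, one_apply_eq, star_apply, Complex.star_def,
    Complex.normSq_conj, mul_one] at h
  exact_mod_cast h.symm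

lemma le_sum_max_zero_of_mem_unitaryConjTraces {p μ : m → ℝ} (hp : ∀ a, p a ∈ Set.Icc 0 1)
    {x : ℝ}
    (hx : x ∈ unitaryConjTraces (diagonal fun a => (p a : ℂ)) (diagonal fun c => (μ c : ℂ))) :
    x ≤ ∑ c, max (μ c) 0 := by
  obtain ⟨U, hU, hUx⟩ := hx
  rw [trace_diagonal_mul_conj_diagonal, Complex.ofReal_inj] at hUx
  rw [← hUx]
  gcongr with c
  have hw0 : 0 ≤ ∑ a, p a * Complex.normSq (U a c) :=
    Finset.sum_nonneg fun a _ => mul_nonneg (hp a).1 (Complex.normSq_nonneg _)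
  have hw1 : ∑ a, p a * Complex.normSq (U a c) ≤ 1 := by
    rw [← sum_normSq_col_eq_one_of_mem_unitaryGroup hU c]
    gcongr with a
    exact mul_le_of_le_one_left (Complex.normSq_nonneg _) (hp a).2
  rcases le_total 0 (μ c) with h | h
  · exact (mul_le_of_le_one_left h hw1).trans (le_max_left _ _)
  · exact (mul_nonpos_of_nonneg_of_nonpos hw0 h).trans (le_max_right _ _)

lemma sum_mul_comp_perm_mem_unitaryConjTraces (p μ : m → ℝ) (σ : Equiv.Perm m) :
    ∑ c, p c * μ (σ c) ∈
      unitaryConjTraces (diagonal fun a => (p a : ℂ)) (diagonal fun c => (μ c : ℂ)) := by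
  rw [← unitaryConjTraces_conj (permMatrix_mem_unitaryGroup σ), permMatrix_mul_diagonal_mul_star]
  apply mem_unitaryConjTraces_of_trace_eq
  simp [trace]

end

lemma exists_mem_unitaryGroup_vecMulVec_eq {r : Fin 2 → ℂ} (hr : star r ⬝ᵥ r = 1) :
    ∃ W ∈ unitaryGroup (Fin 2) ℂ, vecMulVec r (star r) = W * single 0 0 1 * star W := by
  have hr' : starRingEnd ℂ (r 0) * r 0 + starRingEnd ℂ (r 1) * r 1 = 1 := by
    simpa [dotProduct, Fin.sum_univ_two] using hr
  refine ⟨!![r 0, -starRingEnd ℂ (r 1); r 1, starRingEnd ℂ (r 0)], ?_, ?_⟩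
  · rw [mem_unitaryGroup_iff']
    ext i j
    fin_cases i <;> fin_cases j <;>
      simp [mul_apply, Fin.sum_univ_two, one_apply] <;>
      first | linear_combination hr' | ring
  · ext i j
    fin_cases i <;> fin_cases j <;>
      simp [mul_apply, vecMulVec_apply, single, vecHead, vecTail, mul_comm]

section

variable {ι : Type*} [Fintype ι] [DecidableEq ι]

lemma isGreatest_unitaryConjTraces_diagonal_kronecker_single (μ : ι → ℝ) :
    IsGreatest (unitaryConjTraces ((1 : Matrix ι ι ℂ) ⊗ₖ single (0 : Fin 2) 0 1)
        (diagonal (fun i => (μ i : ℂ)) ⊗ₖ single (0 : Fin 2) 0 1))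
      (∑ i, max (μ i) 0) := by
  set p : ι × Fin 2 → ℝ := fun c => if c.2 = 0 then 1 else 0 with hp
  have hP : (1 : Matrix ι ι ℂ) ⊗ₖ single (0 : Fin 2) 0 1 = diagonal fun c => (p c : ℂ) := by
    rw [← diagonal_one, ← diagonal_single, diagonal_kronecker_diagonal]
    congr 1
    ext ⟨i, s⟩
    simp only [hp, Pi.single_apply]
    split_ifs <;> simp
  have hK : diagonal (fun i => (μ i : ℂ)) ⊗ₖ single (0 : Fin 2) 0 1 =
      diagonal fun c => ((μ c.1 * p c : ℝ) : ℂ) := by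
    rw [← diagonal_single, diagonal_kronecker_diagonal]
    congr 1
    ext ⟨i, s⟩
    simp only [hp, Pi.single_apply]
    split_ifs <;> simp
  have hsum : ∑ c : ι × Fin 2, max (μ c.1 * p c) 0 = ∑ i, max (μ i) 0 := by
    simp [hp, Fintype.sum_prod_type]
  rw [hP, hK, ← hsum]
  refine ⟨?_, fun x hx => le_sum_max_zero_of_mem_unitaryConjTraces (fun c => ?_) hx⟩
  · -- flipping the qubit at each negative eigenvalue moves it out of the range of `p`
    let σ : Equiv.Perm (ι × Fin 2) := Equiv.prodShear (Equiv.refl ι) fun i =>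
      if μ i < 0 then Equiv.swap 0 1 else Equiv.refl _
    convert sum_mul_comp_perm_mem_unitaryConjTraces p _ σ using 1
    refine Fintype.sum_congr _ _ fun ⟨i, s⟩ => ?_
    rcases lt_or_ge (μ i) 0 with h | h <;> fin_cases s
    all_goals simp [hp, σ, h, le_of_lt, not_lt_of_ge]
  · simp only [hp]
    split_ifs <;> simp

lemma isGreatest_unitaryConjTraces_kronecker_vecMulVec {V : Matrix ι ι ℂ}
    (hV : V ∈ unitaryGroup ι ℂ) (μ : ι → ℝ) {r : Fin 2 → ℂ} (hr : star r ⬝ᵥ r = 1) :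
    IsGreatest (unitaryConjTraces ((1 : Matrix ι ι ℂ) ⊗ₖ single (0 : Fin 2) 0 1)
        ((V * diagonal (fun i => (μ i : ℂ)) * star V) ⊗ₖ vecMulVec r (star r)))
      (∑ i, max (μ i) 0) := by
  obtain ⟨W, hW, hrW⟩ := exists_mem_unitaryGroup_vecMulVec_eq hr
  have hVW : star V ⊗ₖ star W = star (V ⊗ₖ W) := by
    simp only [star_eq_conjTranspose, conjTranspose_kronecker]
  rw [hrW, mul_kronecker_mul, mul_kronecker_mul, hVW,
    unitaryConjTraces_conj (kronecker_mem_unitary hV hW)]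
  exact isGreatest_unitaryConjTraces_diagonal_kronecker_single μ

end

/-- `‖H‖₁` equals the sum of the two maxima of
`Tr[(I_A ⊗ |0⟩⟨0|_R) U^± (±H ⊗ |r⟩⟨r|) U^±†]` over unitaries on `AR`. -/
theorem traceNorm_eq_max_add_max (n : ℕ)
    (H : Matrix (Fin (2 ^ n)) (Fin (2 ^ n)) ℂ) (hH : H.IsHermitian)
    (r : Fin 2 → ℂ) (hr : star r ⬝ᵥ r = 1) :
    ∃ xp xm : ℝ,
      IsGreatest {x : ℝ | ∃ U ∈ Matrix.unitaryGroup (Fin (2 ^ n) × Fin 2) ℂ,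
          (((1 : Matrix (Fin (2 ^ n)) (Fin (2 ^ n)) ℂ) ⊗ₖ
              Matrix.single (0 : Fin 2) (0 : Fin 2) (1 : ℂ)) *
            (U * (H ⊗ₖ Matrix.vecMulVec r (star r)) * star U)).trace = (x : ℂ)} xp ∧
      IsGreatest {x : ℝ | ∃ U ∈ Matrix.unitaryGroup (Fin (2 ^ n) × Fin 2) ℂ,
          (((1 : Matrix (Fin (2 ^ n)) (Fin (2 ^ n)) ℂ) ⊗ₖ
              Matrix.single (0 : Fin 2) (0 : Fin 2) (1 : ℂ)) *
            (U * ((-H) ⊗ₖ Matrix.vecMulVec r (star r)) * star U)).trace = (x : ℂ)} xm ∧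
      traceNorm H = xp + xm := by
  set V := (hH.eigenvectorUnitary : Matrix (Fin (2 ^ n)) (Fin (2 ^ n)) ℂ)
  have hV : V ∈ unitaryGroup _ ℂ := hH.eigenvectorUnitary.2
  have hspec : V * diagonal (fun i => (hH.eigenvalues i : ℂ)) * star V = H :=
    hH.spectral_theorem.symm
  have hspec_neg : V * diagonal (fun i => ((-hH.eigenvalues i : ℝ) : ℂ)) * star V = -H := by
    have hdiag : diagonal (fun i => ((-hH.eigenvalues i : ℝ) : ℂ)) =
        -diagonal fun i => (hH.eigenvalues i : ℂ) := by
      simp only [Complex.ofReal_neg, diagonal_neg]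
    rw [hdiag, mul_neg, neg_mul]
    exact congrArg Neg.neg hspec
  have hpos := isGreatest_unitaryConjTraces_kronecker_vecMulVec hV hH.eigenvalues hr
  have hneg := isGreatest_unitaryConjTraces_kronecker_vecMulVec hV (-hH.eigenvalues) hr
  rw [hspec] at hpos
  rw [Pi.neg_def, hspec_neg] at hneg
  refine ⟨_, _, hpos, hneg, ?_⟩
  simp only [traceNorm, dif_pos hH, ← Finset.sum_add_distrib, max_zero_add_max_neg_zero_eq_abs_self]
end

section
/- If ρ is a rank-one density matrix (pure state) and σ is an arbitrary density matrix on the same d-dimensional Hilbert space, then ρ − σ has at most one positive eigenvalue. -/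
open Matrix
open scoped ComplexOrder

/-- if `ρ` is a pure (rank-one) density matrix and `σ` is any density matrix,
then `ρ − σ` has at most one positive eigenvalue. -/
theorem pure_sub_state_at_most_one_positive_eigenvalue (d : ℕ)
    (ρ σ : Matrix (Fin d) (Fin d) ℂ)
    (hρ : ρ.PosSemidef) (hρt : ρ.trace = 1) (hρrank : ρ.rank = 1)
    (hσ : σ.PosSemidef) (hσt : σ.trace = 1) :
    (Finset.filter (fun i => 0 < (hρ.1.sub hσ.1).eigenvalues i) Finset.univ).card ≤ 1 := by
  set hA := hρ.1.sub hσ.1 with hAdef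
  by_contra hcard
  push_neg at hcard
  obtain ⟨i, hi, j, hj, hij⟩ := Finset.one_lt_card.mp hcard
  have hi' : 0 < hA.eigenvalues i := (Finset.mem_filter.mp hi).2
  have hj' : 0 < hA.eigenvalues j := (Finset.mem_filter.mp hj).2
  set B := hA.eigenvectorBasis with hB
  set u : Fin d → ℂ := ⇑(B i) with hu
  set w : Fin d → ℂ := ⇑(B j) with hw
  -- ρ *ᵥ u and ρ *ᵥ w are linearly dependent since ρ has rank 1
  have hnli : ¬ LinearIndependent ℂ ![ρ *ᵥ u, ρ *ᵥ w] := by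
    intro h
    have hsub : Submodule.span ℂ (Set.range ![ρ *ᵥ u, ρ *ᵥ w]) ≤ LinearMap.range ρ.mulVecLin := by
      rw [Submodule.span_le]
      rintro z ⟨k, rfl⟩
      fin_cases k
      · exact ⟨u, rfl⟩
      · exact ⟨w, rfl⟩
    have h2 : (2 : ℕ) ≤ Module.finrank ℂ (LinearMap.range ρ.mulVecLin) := by
      calc (2:ℕ) = Module.finrank ℂ (Submodule.span ℂ (Set.range ![ρ *ᵥ u, ρ *ᵥ w])) := by
            rw [finrank_span_eq_card h]; simp
        _ ≤ _ := Submodule.finrank_mono hsub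
    have : ρ.rank = Module.finrank ℂ (LinearMap.range ρ.mulVecLin) := rfl
    omega
  rw [LinearIndependent.pair_iff] at hnli
  push_neg at hnli
  obtain ⟨a, b, hab, hne⟩ := hnli
  set v : Fin d → ℂ := a • u + b • w with hv
  have hρv : ρ *ᵥ v = 0 := by
    rw [hv, mulVec_add, mulVec_smul, mulVec_smul, hab]
  -- orthonormality facts
  have horth := orthonormal_iff_ite.mp B.orthonormal
  have huu : star u ⬝ᵥ u = 1 := by
    have := horth i i; simp [EuclideanSpace.inner_eq_star_dotProduct] at this
    have h2 := horth i i; rw [EuclideanSpace.inner_eq_star_dotProduct, dotProduct_comm] at h2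
    simpa [hu] using h2
  have hww : star w ⬝ᵥ w = 1 := by
    have := horth j j; simp [EuclideanSpace.inner_eq_star_dotProduct] at this
    have h2 := horth j j; rw [EuclideanSpace.inner_eq_star_dotProduct, dotProduct_comm] at h2
    simpa [hw] using h2
  have huw : star u ⬝ᵥ w = 0 := by
    have := horth i j; simp [EuclideanSpace.inner_eq_star_dotProduct, hij] at this
    have h2 := horth i j; rw [EuclideanSpace.inner_eq_star_dotProduct, dotProduct_comm] at h2
    simpa [hu, hw, hij] using h2
  have hwu : star w ⬝ᵥ u = 0 := by
    have := horth j i; simp [EuclideanSpace.inner_eq_star_dotProduct, hij.symm] at this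
    have h2 := horth j i; rw [EuclideanSpace.inner_eq_star_dotProduct, dotProduct_comm] at h2
    simpa [hu, hw, hij.symm] using h2
  -- eigenvector equations
  have hAu : (ρ - σ) *ᵥ u = (hA.eigenvalues i : ℂ) • u := by
    simpa [hu, Complex.real_smul] using hA.mulVec_eigenvectorBasis i
  have hAw : (ρ - σ) *ᵥ w = (hA.eigenvalues j : ℂ) • w := by
    simpa [hw, Complex.real_smul] using hA.mulVec_eigenvectorBasis j
  -- compute the quadratic form two ways
  have key : star v ⬝ᵥ ((ρ - σ) *ᵥ v)
      = (hA.eigenvalues i : ℂ) * (starRingEnd ℂ a * a) + (hA.eigenvalues j : ℂ) * (starRingEnd ℂ b * b) := by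
    rw [hv, mulVec_add, mulVec_smul, mulVec_smul, hAu, hAw]
    simp only [star_add, star_smul, add_dotProduct, dotProduct_add, smul_dotProduct,
      dotProduct_smul, huu, hww, huw, hwu, smul_eq_mul, mul_one, mul_zero, add_zero, zero_add,
      RCLike.star_def]
    ring
  have hpos : 0 < star v ⬝ᵥ ((ρ - σ) *ᵥ v) := by
    rw [key]
    have ha' : starRingEnd ℂ a * a = (Complex.normSq a : ℂ) := by
      rw [mul_comm, Complex.mul_conj]
    have hb' : starRingEnd ℂ b * b = (Complex.normSq b : ℂ) := by
      rw [mul_comm, Complex.mul_conj]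
    rw [ha', hb', ← Complex.ofReal_mul, ← Complex.ofReal_mul, ← Complex.ofReal_add]
    rw [Complex.zero_lt_real]
    rcases eq_or_ne a 0 with h | h
    · have : 0 < Complex.normSq b := Complex.normSq_pos.mpr (hne h)
      nlinarith [Complex.normSq_nonneg a, mul_nonneg (le_of_lt hi') (Complex.normSq_nonneg a)]
    · have : 0 < Complex.normSq a := Complex.normSq_pos.mpr h
      nlinarith [Complex.normSq_nonneg b, mul_nonneg (le_of_lt hj') (Complex.normSq_nonneg b)]
  have hneg : star v ⬝ᵥ ((ρ - σ) *ᵥ v) ≤ 0 := by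
    rw [sub_mulVec, hρv, zero_sub, dotProduct_neg, neg_nonpos]
    exact hσ.dotProduct_mulVec_nonneg v
  exact hpos.not_ge hneg
end
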